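/- A linear operator Φ on π₃ is an automorphism of π₃ if and only if there exist complex numbers a₁₁, a₂₁, a₃₁, a₅₁, a₃₄, a₅₄ with a₁₁ ≠ 0 such that the matrix of Φ is [[a₁₁,0,0,0,0],[a₂₁,a₁₁²,0,0,0],[a₃₁,2a₁₁a₂₁,a₁₁³,a₃₄,0],[0,0,0,a₁₁,0],[a₅₁,0,0,a₅₄,a₁₁²]]. -/
import Mathlib


noncomputable section

/-- The multiplication of the 5-dimensional naturally graded nilpotent associative
algebra `π₃`, given on the basis `e₁, …, e₅` (indices `0, …, 4`) by
`e₁e₁ = e₂`, `e₁e₂ = e₂e₁ = e₃`, `e₁e₄ = e₅`, `e₄e₄ = e₅`. -/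
def pi3Mul (x y : Fin 5 → ℂ) : Fin 5 → ℂ :=
  ![0, x 0 * y 0, x 0 * y 1 + x 1 * y 0, 0, x 0 * y 3 + x 3 * y 3]

/-- An automorphism of `π₃`: a bijective linear operator respecting the multiplication. -/
def IsPi3Aut (Φ : (Fin 5 → ℂ) →ₗ[ℂ] (Fin 5 → ℂ)) : Prop :=
  Function.Bijective Φ ∧ ∀ x y, Φ (pi3Mul x y) = pi3Mul (Φ x) (Φ y)

theorem pi3_aut_iff (Φ : (Fin 5 → ℂ) →ₗ[ℂ] (Fin 5 → ℂ)) :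
    IsPi3Aut Φ ↔
      ∃ a11 a21 a31 a51 a34 a54 : ℂ, a11 ≠ 0 ∧
        LinearMap.toMatrix' Φ =
          !![a11, 0, 0, 0, 0;
             a21, a11 ^ 2, 0, 0, 0;
             a31, 2 * a11 * a21, a11 ^ 3, a34, 0;
             0, 0, 0, a11, 0;
             a51, 0, 0, a54, a11 ^ 2] := by
  constructor
  · rintro ⟨hbij, hmul⟩
    set M := LinearMap.toMatrix' Φ with hM
    have hΦ : ∀ x, Φ x = M.mulVec x := by
      intro x
      rw [hM, ← Matrix.toLin'_apply, Matrix.toLin'_toMatrix']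
    have hmul' : ∀ x y, M.mulVec (pi3Mul x y) = pi3Mul (M.mulVec x) (M.mulVec y) := by
      intro x y; rw [← hΦ, ← hΦ, ← hΦ, hmul]
    have c0 : M.mulVec ![1,0,0,0,0] = fun i => M i 0 := by
      funext i; simp [Matrix.mulVec, dotProduct, Fin.sum_univ_five]
    have c1 : M.mulVec ![0,1,0,0,0] = fun i => M i 1 := by
      funext i; simp [Matrix.mulVec, dotProduct, Fin.sum_univ_five]
    have c2 : M.mulVec ![0,0,1,0,0] = fun i => M i 2 := by
      funext i; simp [Matrix.mulVec, dotProduct, Fin.sum_univ_five]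
    have c3 : M.mulVec ![0,0,0,1,0] = fun i => M i 3 := by
      funext i; simp [Matrix.mulVec, dotProduct, Fin.sum_univ_five]
    have c4 : M.mulVec ![0,0,0,0,1] = fun i => M i 4 := by
      funext i; simp [Matrix.mulVec, dotProduct, Fin.sum_univ_five]
    have p00 : pi3Mul ![1,0,0,0,0] ![1,0,0,0,0] = ![0,1,0,0,0] := by
      funext i; fin_cases i <;> simp [pi3Mul]
    have p01 : pi3Mul ![1,0,0,0,0] ![0,1,0,0,0] = ![0,0,1,0,0] := by
      funext i; fin_cases i <;> simp [pi3Mul]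
    have p03 : pi3Mul ![1,0,0,0,0] ![0,0,0,1,0] = ![0,0,0,0,1] := by
      funext i; fin_cases i <;> simp [pi3Mul]
    have p30 : pi3Mul ![0,0,0,1,0] ![1,0,0,0,0] = 0 := by
      funext i; fin_cases i <;> simp [pi3Mul]
    have p33 : pi3Mul ![0,0,0,1,0] ![0,0,0,1,0] = ![0,0,0,0,1] := by
      funext i; fin_cases i <;> simp [pi3Mul]
    have E00 : (fun i => M i 1) = pi3Mul (fun j => M j 0) (fun j => M j 0) := by
      rw [← c1, ← c0, ← p00]; exact hmul' _ _
    have E01 : (fun i => M i 2) = pi3Mul (fun j => M j 0) (fun j => M j 1) := by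
      rw [← c2, ← c0, ← c1, ← p01]; exact hmul' _ _
    have E03 : (fun i => M i 4) = pi3Mul (fun j => M j 0) (fun j => M j 3) := by
      rw [← c4, ← c0, ← c3, ← p03]; exact hmul' _ _
    have E30 : (0 : Fin 5 → ℂ) = pi3Mul (fun j => M j 3) (fun j => M j 0) := by
      rw [← c3, ← c0, ← hmul' _ _, p30, Matrix.mulVec_zero]
    have E33 : (fun i => M i 4) = pi3Mul (fun j => M j 3) (fun j => M j 3) := by
      rw [← c4, ← c3, ← p33]; exact hmul' _ _
    have h01 : M 0 1 = 0 := by simpa [pi3Mul] using congrFun E00 0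
    have h11 : M 1 1 = M 0 0 * M 0 0 := by simpa [pi3Mul] using congrFun E00 1
    have h21 : M 2 1 = M 0 0 * M 1 0 + M 1 0 * M 0 0 := by simpa [pi3Mul] using congrFun E00 2
    have h31 : M 3 1 = 0 := by simpa [pi3Mul] using congrFun E00 3
    have h41 : M 4 1 = M 0 0 * M 3 0 + M 3 0 * M 3 0 := by simpa [pi3Mul] using congrFun E00 4
    have h02 : M 0 2 = 0 := by simpa [pi3Mul] using congrFun E01 0
    have h12 : M 1 2 = M 0 0 * M 0 1 := by simpa [pi3Mul] using congrFun E01 1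
    have h22 : M 2 2 = M 0 0 * M 1 1 + M 1 0 * M 0 1 := by simpa [pi3Mul] using congrFun E01 2
    have h32 : M 3 2 = 0 := by simpa [pi3Mul] using congrFun E01 3
    have h42 : M 4 2 = M 0 0 * M 3 1 + M 3 0 * M 3 1 := by simpa [pi3Mul] using congrFun E01 4
    have h04 : M 0 4 = 0 := by simpa [pi3Mul] using congrFun E03 0
    have h14 : M 1 4 = M 0 0 * M 0 3 := by simpa [pi3Mul] using congrFun E03 1
    have h24 : M 2 4 = M 0 0 * M 1 3 + M 1 0 * M 0 3 := by simpa [pi3Mul] using congrFun E03 2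
    have h34 : M 3 4 = 0 := by simpa [pi3Mul] using congrFun E03 3
    have h44 : M 4 4 = M 0 0 * M 3 3 + M 3 0 * M 3 3 := by simpa [pi3Mul] using congrFun E03 4
    have g1 : (0:ℂ) = M 0 3 * M 0 0 := by simpa [pi3Mul] using congrFun E30 1
    have g2 : (0:ℂ) = M 0 3 * M 1 0 + M 1 3 * M 0 0 := by simpa [pi3Mul] using congrFun E30 2
    have g4 : (0:ℂ) = M 0 3 * M 3 0 + M 3 3 * M 3 0 := by simpa [pi3Mul] using congrFun E30 4
    have f4 : M 4 4 = M 0 3 * M 3 3 + M 3 3 * M 3 3 := by simpa [pi3Mul] using congrFun E33 4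
    have hne : M 0 0 ≠ 0 := by
      intro h0
      have hz : Φ ![0,0,1,0,0] = Φ 0 := by
        rw [map_zero, hΦ, c2]
        funext i; fin_cases i <;>
          simp [h02, h12, h22, h32, h42, h01, h11, h31, h0]
      have := congrFun (hbij.injective hz) 2
      simp at this
    have h03 : M 0 3 = 0 := by
      rcases mul_eq_zero.mp g1.symm with h | h
      · exact h
      · exact absurd h hne
    have h13 : M 1 3 = 0 := by
      have h := g2
      rw [h03] at h
      simp [hne] at h
      exact h
    have hne3 : M 3 3 ≠ 0 := by
      intro h0
      have hz : Φ ![0,0,0,0,1] = Φ 0 := by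
        rw [map_zero, hΦ, c4]
        funext i; fin_cases i <;>
          simp [h04, h14, h24, h34, h44, h03, h13, h0]
      have := congrFun (hbij.injective hz) 4
      simp at this
    have h30 : M 3 0 = 0 := by
      have h := g4
      rw [h03] at h
      simp [hne3] at h
      exact h
    have h33 : M 3 3 = M 0 0 := by
      have e := h44.symm.trans f4
      rw [h03, h30] at e
      simp at e
      rcases e with h | h
      · exact h.symm
      · exact absurd h hne3
    refine ⟨M 0 0, M 1 0, M 2 0, M 4 0, M 2 3, M 4 3, hne, ?_⟩
    ext i j
    fin_cases i <;> fin_cases j <;>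
      simp [Matrix.vecHead, Matrix.vecTail, h01, h11, h21, h31, h41, h02, h12, h22, h32,
        h42, h04, h14, h24, h34, h44, h03, h13, h30, h33] <;> ring
  · rintro ⟨a11, a21, a31, a51, a34, a54, ha, hMeq⟩
    set T : Matrix (Fin 5) (Fin 5) ℂ :=
      !![a11, 0, 0, 0, 0;
         a21, a11 ^ 2, 0, 0, 0;
         a31, 2 * a11 * a21, a11 ^ 3, a34, 0;
         0, 0, 0, a11, 0;
         a51, 0, 0, a54, a11 ^ 2] with hT
    have hΦ : ∀ x, Φ x = T.mulVec x := by
      intro x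
      rw [← Matrix.toLin'_apply, ← hMeq, Matrix.toLin'_toMatrix']
    have hinj : Function.Injective Φ := by
      rw [← LinearMap.ker_eq_bot, LinearMap.ker_eq_bot']
      intro x hx
      rw [hΦ] at hx
      have q0 := congrFun hx 0
      have q1 := congrFun hx 1
      have q2 := congrFun hx 2
      have q3 := congrFun hx 3
      have q4 := congrFun hx 4
      simp [hT, Matrix.mulVec, dotProduct, Fin.sum_univ_five] at q0 q1 q2 q3 q4
      have x0 : x 0 = 0 := q0.resolve_left ha
      rw [x0] at q1
      simp [ha, pow_eq_zero_iff] at q1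
      have x3 : x 3 = 0 := q3.resolve_left ha
      rw [x0, q1, x3] at q2
      simp [ha, pow_eq_zero_iff] at q2
      rw [x0, x3] at q4
      simp [ha, pow_eq_zero_iff] at q4
      funext i
      fin_cases i <;> simp [x0, q1, q2, x3, q4]
    refine ⟨⟨hinj, LinearMap.injective_iff_surjective.mp hinj⟩, ?_⟩
    intro x y
    rw [hΦ, hΦ, hΦ]
    funext i
    fin_cases i <;>
      simp [pi3Mul, hT, Matrix.mulVec, dotProduct, Fin.sum_univ_five] <;> ring
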